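/- arXiv:1402.3119 — 5 statements merged into one kernel-verified Lean document; each statement's English description precedes it below -/
import Mathlib

section
/- Lemma 1 (Triangle sums). Let r ≥ 1 be an integer and let x : V(r) → ℝ be any assignment of real values to the vertices. Then Σ_{v ∈ V(r)} x_v = Σ_{(a,b) ∈ T(r)} (x_{(a,b)} + x_{(a,b+1)} + x_{(a+1,b+1)})/2 + Σ_{v ∈ V_ex(r)} (1 − n_v/2)·x_v. -/
/-- Vertex set of the cellular interference graph: pairs `(a,b)` identified with
the Eisenstein integer `a + bω`, where `ω = (−1+i√3)/2`, satisfying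
`|Re(a+bω)| ≤ r` and `|Im(a+bω)| ≤ (√3/2)r`, i.e. `|2a − b| ≤ 2r` and `|b| ≤ r`. -/
noncomputable def V (r : ℤ) : Finset (ℤ × ℤ) :=
  (Finset.Icc (-(2 * r)) (2 * r) ×ˢ Finset.Icc (-r) r).filter
    (fun p => |2 * p.1 - p.2| ≤ 2 * r ∧ |p.2| ≤ r)

/-- `f(a,b) = (a+b) mod 3`. -/
def f (p : ℤ × ℤ) : ℤ := (p.1 + p.2) % 3

/-- Triangle index set: `(a,b)` with `f(a,b) ≠ 0` such that all three points
`(a,b)`, `(a,b+1)`, `(a+1,b+1)` lie in `V r`. -/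
noncomputable def T (r : ℤ) : Finset (ℤ × ℤ) :=
  (V r).filter (fun p => f p ≠ 0 ∧ (p.1, p.2 + 1) ∈ V r ∧ (p.1 + 1, p.2 + 1) ∈ V r)

/-- The vertex set of the triangle indexed by `p = (a,b)`:
`{(a,b), (a,b+1), (a+1,b+1)}`. -/
def triVerts (p : ℤ × ℤ) : Finset (ℤ × ℤ) := {p, (p.1, p.2 + 1), (p.1 + 1, p.2 + 1)}

/-- The number `n_v` of triangles of `T r` whose vertex set contains `v`. -/
noncomputable def nTri (r : ℤ) (v : ℤ × ℤ) : ℕ := ((T r).filter (fun p => v ∈ triVerts p)).card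

/-- The boundary vertices: those belonging to fewer than two triangles. -/
noncomputable def Vex (r : ℤ) : Finset (ℤ × ℤ) := (V r).filter (fun v => nTri r v < 2)

/-!
Every vertex `v` lies in at most two triangles of `T r`: the only candidates are those indexed
by `v`, `v - (0,1)` and `v - (1,1)`, whose values of `f` are `f v`, `f v - 1`, `f v - 2` modulo 3,
so one of them is excluded by `f ≠ 0`. Double counting gives `Σ_T (triangle sums) = Σ_V n_v x_v`,
so `Σ_V x_v = Σ_T (triangle sums)/2 + Σ_V (1 - n_v/2) x_v`, and the summand `(1 - n_v/2) x_v`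
vanishes unless `n_v < 2`.
-/

open Finset

theorem Finset.sum_sum_eq_sum_card_nsmul {ι α M : Type*} [DecidableEq α] [AddCommMonoid M]
    (s : Finset ι) (t : Finset α) (g : ι → Finset α) (hg : ∀ i ∈ s, g i ⊆ t) (x : α → M) :
    ∑ i ∈ s, ∑ a ∈ g i, x a = ∑ a ∈ t, #{i ∈ s | a ∈ g i} • x a := by
  rw [sum_comm' (t' := t) (s' := fun a => {i ∈ s | a ∈ g i})]
  · simp only [sum_const]
  · intro i a
    simp only [mem_filter]
    exact ⟨fun h => ⟨⟨h.1, h.2⟩, hg i h.1 h.2⟩, fun h => ⟨h.1.1, h.1.2⟩⟩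

theorem sum_triVerts {M : Type*} [AddCommMonoid M] (x : ℤ × ℤ → M) (p : ℤ × ℤ) :
    ∑ v ∈ triVerts p, x v = x p + x (p.1, p.2 + 1) + x (p.1 + 1, p.2 + 1) := by
  rw [triVerts, sum_insert (by simp [Prod.ext_iff]), sum_pair (by simp [Prod.ext_iff]), add_assoc]

theorem triVerts_subset_V {r : ℤ} {p : ℤ × ℤ} (hp : p ∈ T r) : triVerts p ⊆ V r := by
  simp only [T, mem_filter] at hp
  intro v hv
  simp only [triVerts, mem_insert, mem_singleton] at hv
  rcases hv with rfl | rfl | rfl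
  exacts [hp.1, hp.2.2.1, hp.2.2.2]

theorem f_injOn_setOf_mem_triVerts (v : ℤ × ℤ) : Set.InjOn f {p | v ∈ triVerts p} := by
  intro p hp q hq hpq
  simp only [Set.mem_ofPred_eq, triVerts, mem_insert, mem_singleton, Prod.ext_iff, f] at hp hq hpq ⊢
  omega

theorem nTri_le_two (r : ℤ) (v : ℤ × ℤ) : nTri r v ≤ 2 := by
  have hmaps : Set.MapsTo f (({p ∈ T r | v ∈ triVerts p} : Finset _) : Set (ℤ × ℤ))
      (({1, 2} : Finset ℤ) : Set ℤ) := by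
    intro p hp
    have hf : f p ≠ 0 := (mem_filter.mp (mem_filter.mp hp).1).2.1
    simp only [f, coe_insert, coe_singleton, Set.mem_insert_iff, Set.mem_singleton_iff] at hf ⊢
    omega
  exact card_le_card_of_injOn f hmaps
    ((f_injOn_setOf_mem_triVerts v).mono fun p hp => (mem_filter.mp hp).2)

theorem sum_T_triangle_eq_sum_nTri_mul (r : ℤ) (x : ℤ × ℤ → ℝ) :
    ∑ p ∈ T r, (x p + x (p.1, p.2 + 1) + x (p.1 + 1, p.2 + 1)) =
      ∑ v ∈ V r, (nTri r v : ℝ) * x v := by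
  simp_rw [← sum_triVerts, sum_sum_eq_sum_card_nsmul _ _ _ (fun _ => triVerts_subset_V) x,
    nsmul_eq_mul, nTri]

theorem sum_Vex_eq_sum_V (r : ℤ) (x : ℤ × ℤ → ℝ) :
    ∑ v ∈ Vex r, (1 - (nTri r v : ℝ) / 2) * x v = ∑ v ∈ V r, (1 - (nTri r v : ℝ) / 2) * x v := by
  refine sum_filter_of_ne fun v _ hv => lt_of_le_of_ne (nTri_le_two r v) fun h2 => hv ?_
  simp [h2]

theorem triangle_sums_general (r : ℤ) (x : ℤ × ℤ → ℝ) :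
    ∑ v ∈ V r, x v =
      (∑ p ∈ T r, (x p + x (p.1, p.2 + 1) + x (p.1 + 1, p.2 + 1)) / 2) +
      ∑ v ∈ Vex r, (1 - (nTri r v : ℝ) / 2) * x v := by
  rw [← sum_div, sum_T_triangle_eq_sum_nTri_mul, sum_Vex_eq_sum_V, sum_div, ← sum_add_distrib]
  exact sum_congr rfl fun v _ => by ring

/-- **Lemma 1 (Triangle sums).** For any real values `x_v` on the vertices,
`Σ_{v ∈ V(r)} x_v = Σ_{(a,b) ∈ T(r)} (x_{(a,b)} + x_{(a,b+1)} + x_{(a+1,b+1)})/2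
  + Σ_{v ∈ V_ex(r)} (1 − n_v/2)·x_v`. -/
theorem triangle_sums (r : ℤ) (hr : 1 ≤ r) (x : ℤ × ℤ → ℝ) :
    ∑ v ∈ V r, x v =
      (∑ p ∈ T r, (x p + x (p.1, p.2 + 1) + x (p.1 + 1, p.2 + 1)) / 2) +
      ∑ v ∈ Vex r, (1 - (nTri r v : ℝ) / 2) * x v :=
  triangle_sums_general r x
end

section
/- Cardinality of the triangle set: for every integer r ≥ 2, |T(r)| = r·(4r − ⌊(r−2)/3⌋ − 2⌊(r−1)/3⌋ − ⌊(r+1)/3⌋ − 3). -/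
/-!
In the coordinates `u = 2a - b` and `b`, the triangles `(a, b)` of `T r` are exactly the points with
`-r ≤ b < r`, `|u| < 2r`, `b ≡ u (mod 2)` and `3 ∤ u` (because `2(a + b) = u + 3b`).
For each admissible `u`, exactly `r` values of `b` in `[-r, r)` have the parity of `u`, so
`|T(r)| = r · #{u : |u| < 2r, 3 ∤ u} = r · (4r - 2 - 2⌊(2r - 1)/3⌋)`, and the last factor agrees with
the stated one in each residue class of `r` mod 3.
-/

open Finset

namespace Int

lemma Icc_neg_filter_dvd_card {m n : ℤ} (hm : 0 < m) (hn : 0 ≤ n) :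
    (#{x ∈ Icc (-n) n | m ∣ x} : ℤ) = 2 * (n / m) + 1 := by
  have hmap : {x ∈ Icc (-n) n | m ∣ x} =
      (Icc (-(n / m)) (n / m)).map ⟨(· * m), mul_left_injective₀ hm.ne'⟩ := by
    ext x
    simp only [mem_filter, mem_Icc, mem_map, Function.Embedding.coeFn_mk]
    constructor
    · rintro ⟨⟨hlo, hhi⟩, t, rfl⟩
      refine ⟨t, ⟨?_, ?_⟩, mul_comm t m⟩
      · rw [neg_le, Int.le_ediv_iff_mul_le hm]; linarith
      · rw [Int.le_ediv_iff_mul_le hm]; linarith [mul_comm m t]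
    · rintro ⟨t, ⟨hlo, hhi⟩, rfl⟩
      rw [neg_le, Int.le_ediv_iff_mul_le hm] at hlo
      rw [Int.le_ediv_iff_mul_le hm] at hhi
      exact ⟨⟨by linarith, hhi⟩, dvd_mul_left m t⟩
  rw [hmap, card_map, card_Icc]
  have := ediv_nonneg hn hm.le
  omega

lemma Icc_neg_filter_not_dvd_card {m n : ℤ} (hm : 0 < m) (hn : 0 ≤ n) :
    (#{x ∈ Icc (-n) n | ¬ m ∣ x} : ℤ) = 2 * n - 2 * (n / m) := by
  rw [filter_not, card_sdiff_of_subset (filter_subset _ _),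
    Nat.cast_sub (card_le_card (filter_subset _ _)), card_Icc, Icc_neg_filter_dvd_card hm hn]
  omega

end Int

lemma mem_T_iff {r : ℤ} {p : ℤ × ℤ} :
    p ∈ T r ↔ (-r ≤ p.2 ∧ p.2 < r) ∧ |2 * p.1 - p.2| < 2 * r ∧ ¬ 3 ∣ p.1 + p.2 := by
  simp only [T, V, f, mem_filter, mem_product, mem_Icc, abs_le, abs_lt]
  omega

lemma card_T_eq_mul (r : ℤ) :
    #(T r) = #(Ico 0 r) * #{u ∈ Icc (-(2 * r - 1)) (2 * r - 1) | ¬ 3 ∣ u} := by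
  rw [← card_product]
  -- `(k, u)` encodes `b = 2k - r + ((u + r) mod 2)`, the `k`-th value of `b` with the parity of `u`
  refine card_nbij' (fun p => ((p.2 + r) / 2, 2 * p.1 - p.2))
    (fun q => ((q.2 + (2 * q.1 - r + (q.2 + r) % 2)) / 2, 2 * q.1 - r + (q.2 + r) % 2))
    ?_ ?_ ?_ ?_
  all_goals
    intro _ h
    simp only [mem_coe, mem_product, mem_filter, mem_Icc, mem_Ico, mem_T_iff, abs_lt,
      Prod.ext_iff] at h ⊢
    omega

/-- Cardinality of the triangle set: for `r ≥ 2`,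
`|T(r)| = r·(4r − ⌊(r−2)/3⌋ − 2⌊(r−1)/3⌋ − ⌊(r+1)/3⌋ − 3)`.
(The arguments of the divisions are nonnegative, so integer division is floor.) -/
theorem card_T (r : ℤ) (hr : 2 ≤ r) :
    ((T r).card : ℤ) =
      r * (4 * r - (r - 2) / 3 - 2 * ((r - 1) / 3) - (r + 1) / 3 - 3) := by
  have hfloors : 2 * (2 * r - 1) - 2 * ((2 * r - 1) / 3) =
      4 * r - (r - 2) / 3 - 2 * ((r - 1) / 3) - (r + 1) / 3 - 3 := by
    rcases (by omega : r % 3 = 0 ∨ r % 3 = 1 ∨ r % 3 = 2) with h | h | h <;> omega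
  rw [card_T_eq_mul, Nat.cast_mul, Int.Icc_neg_filter_not_dvd_card (by norm_num) (by omega),
    hfloors, Int.card_Ico, sub_zero, Int.toNat_of_nonneg (by omega)]
end

section
/- Linear bound on the number of boundary vertices: for every integer r ≥ 1, |V_ex(r)| ≤ 12r + 2. -/
/-! A vertex `(a, b)` with `|2a − b| ≤ 2r − 2` and `|b| ≤ r − 1` lies in the three triangles
indexed by `(a, b)`, `(a, b − 1)` and `(a − 1, b − 1)`, all inside `V r`; their `f`-values are
`f(a,b)`, `f(a,b) − 1` and `f(a,b) − 2` mod 3, so exactly two of them belong to `T r`. Hence every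
vertex of `V_ex(r)` lies on one of the four boundary lines `b = r`, `b = −r`, `2a − b ≥ 2r − 1`,
`2a − b ≤ 1 − 2r`, each of which meets `V r` in at most `2r + 1` points, and
`4(2r + 1) ≤ 12r + 2`. -/

lemma mem_V_iff {r a b : ℤ} :
    (a, b) ∈ V r ↔ -(2 * r) ≤ 2 * a - b ∧ 2 * a - b ≤ 2 * r ∧ -r ≤ b ∧ b ≤ r := by
  simp only [V, Finset.mem_filter, Finset.mem_product, Finset.mem_Icc, abs_le]
  omega

lemma mem_T_of {r a b : ℤ} (hf : (a + b) % 3 ≠ 0) (h₁ : -(2 * r) ≤ 2 * a - b - 1)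
    (h₂ : 2 * a - b + 1 ≤ 2 * r) (h₃ : -r ≤ b) (h₄ : b + 1 ≤ r) : (a, b) ∈ T r := by
  exact Finset.mem_filter.2
    ⟨mem_V_iff.2 (by omega), hf, mem_V_iff.2 (by omega), mem_V_iff.2 (by omega)⟩

lemma two_le_nTri_of_interior {r a b : ℤ} (h₁ : -(2 * r - 2) ≤ 2 * a - b)
    (h₂ : 2 * a - b ≤ 2 * r - 2) (h₃ : -(r - 1) ≤ b) (h₄ : b ≤ r - 1) : 2 ≤ nTri r (a, b) := by
  have two_triangles : ∀ p q, p ≠ q → p ∈ T r → q ∈ T r → (a, b) ∈ triVerts p →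
      (a, b) ∈ triVerts q → 2 ≤ nTri r (a, b) := fun p q hpq hp hq hvp hvq =>
    Finset.one_lt_card.2 ⟨p, Finset.mem_filter.2 ⟨hp, hvp⟩, q, Finset.mem_filter.2 ⟨hq, hvq⟩, hpq⟩
  have vert_ab : (a, b) ∈ triVerts (a, b) := by simp [triVerts]
  have vert_below : (a, b) ∈ triVerts (a, b - 1) := by simp [triVerts]
  have vert_diag : (a, b) ∈ triVerts (a - 1, b - 1) := by simp [triVerts]
  have tri_ab : (a + b) % 3 ≠ 0 → (a, b) ∈ T r := fun hf =>
    mem_T_of hf (by omega) (by omega) (by omega) (by omega)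
  have tri_below : (a + b - 1) % 3 ≠ 0 → (a, b - 1) ∈ T r := fun hf =>
    mem_T_of (by omega) (by omega) (by omega) (by omega) (by omega)
  have tri_diag : (a + b - 2) % 3 ≠ 0 → (a - 1, b - 1) ∈ T r := fun hf =>
    mem_T_of (by omega) (by omega) (by omega) (by omega) (by omega)
  have hne : ∀ {p q : ℤ × ℤ}, p.2 ≠ q.2 ∨ p.1 ≠ q.1 → p ≠ q := fun h he => by subst he; tauto
  rcases (by omega : (a + b) % 3 = 0 ∨ (a + b) % 3 = 1 ∨ (a + b) % 3 = 2) with h | h | h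
  · exact two_triangles _ _ (hne (.inr (by omega))) (tri_below (by omega)) (tri_diag (by omega))
      vert_below vert_diag
  · exact two_triangles _ _ (hne (.inl (by omega))) (tri_ab (by omega)) (tri_diag (by omega))
      vert_ab vert_diag
  · exact two_triangles _ _ (hne (.inl (by omega))) (tri_ab (by omega)) (tri_below (by omega))
      vert_ab vert_below

lemma card_le_of_injOn_Icc {α : Type*} {s : Finset α} {r : ℤ} (hr : 0 ≤ r) (g : α → ℤ)
    (hg : ∀ v ∈ s, -r ≤ g v ∧ g v ≤ r) (hinj : Set.InjOn g s) : (s.card : ℤ) ≤ 2 * r + 1 := by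
  have := Finset.card_le_card_of_injOn g (t := Finset.Icc (-r) r)
    (fun v hv => Finset.mem_Icc.2 (hg v hv)) hinj
  rw [Int.card_Icc] at this
  omega

lemma card_filter_snd_eq_le {r : ℤ} (hr : 0 ≤ r) (c : ℤ) :
    (((V r).filter (·.2 = c)).card : ℤ) ≤ 2 * r + 1 := by
  refine card_le_of_injOn_Icc hr (fun v => (2 * v.1 - v.2) / 2) ?_ ?_
  · rintro ⟨a, b⟩ hv
    rw [Finset.mem_filter, mem_V_iff] at hv
    omega
  · rintro ⟨a, b⟩ hv ⟨a', b'⟩ hv' h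
    rw [Finset.mem_coe, Finset.mem_filter] at hv hv'
    simp only [Prod.mk.injEq] at h ⊢
    omega

lemma card_filter_two_diagonals_le {r : ℤ} (hr : 0 ≤ r) (c : ℤ) :
    (((V r).filter (fun v => c ≤ 2 * v.1 - v.2 ∧ 2 * v.1 - v.2 ≤ c + 1)).card : ℤ) ≤ 2 * r + 1 := by
  refine card_le_of_injOn_Icc hr Prod.snd ?_ ?_
  · rintro ⟨a, b⟩ hv
    rw [Finset.mem_filter, mem_V_iff] at hv
    omega
  · rintro ⟨a, b⟩ hv ⟨a', b'⟩ hv' h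
    rw [Finset.mem_coe, Finset.mem_filter] at hv hv'
    simp only [Prod.mk.injEq] at h ⊢
    omega

noncomputable def boundary (r : ℤ) : Finset (ℤ × ℤ) :=
  (V r).filter (·.2 = r) ∪ (V r).filter (·.2 = -r) ∪
    (V r).filter (fun v => 2 * r - 1 ≤ 2 * v.1 - v.2 ∧ 2 * v.1 - v.2 ≤ 2 * r) ∪
    (V r).filter (fun v => -(2 * r) ≤ 2 * v.1 - v.2 ∧ 2 * v.1 - v.2 ≤ -(2 * r) + 1)

lemma card_boundary_le {r : ℤ} (hr : 0 ≤ r) : ((boundary r).card : ℤ) ≤ 4 * (2 * r + 1) := by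
  unfold boundary
  grw [Finset.card_union_le, Finset.card_union_le, Finset.card_union_le]
  have := card_filter_snd_eq_le hr r
  have := card_filter_snd_eq_le hr (-r)
  have := card_filter_two_diagonals_le hr (2 * r - 1)
  rw [sub_add_cancel] at this
  have := card_filter_two_diagonals_le hr (-(2 * r))
  push_cast
  omega

lemma Vex_subset_boundary (r : ℤ) : Vex r ⊆ boundary r := by
  rintro ⟨a, b⟩ hv
  obtain ⟨hV, hn⟩ := Finset.mem_filter.1 hv
  have not_interior :
      ¬(-(2 * r - 2) ≤ 2 * a - b ∧ 2 * a - b ≤ 2 * r - 2 ∧ -(r - 1) ≤ b ∧ b ≤ r - 1) :=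
    fun ⟨h₁, h₂, h₃, h₄⟩ => (two_le_nTri_of_interior h₁ h₂ h₃ h₄).not_gt hn
  have := mem_V_iff.1 hV
  simp only [boundary, Finset.mem_union, Finset.mem_filter, hV, true_and]
  omega

/-- Linear bound on the number of boundary vertices: `|V_ex(r)| ≤ 12r + 2`. -/
theorem card_Vex_le_linear (r : ℤ) (hr : 1 ≤ r) :
    ((Vex r).card : ℤ) ≤ 12 * r + 2 := by
  have hsub := Finset.card_le_card (Vex_subset_boundary r)
  have hbd := card_boundary_le (r := r) (by omega)
  omega
end

section
/- In-degree structure under the left-to-right, top-down decoding order: let r ≥ 1 and let u = (a,b) ∈ V(r). Define N⁺(u) = {v ∈ V(r) : {u,v} ∈ E(r) and u ≺ v}. Then: if f(u) = 1 then N⁺(u) ⊆ {(a−1,b−1)}; if f(u) = 2 then N⁺(u) ⊆ {(a+1,b), (a,b−1)}; and if f(u) = 0 then N⁺(u) ⊆ {(a+1,b), (a,b−1), (a−1,b−1)}. In particular |N⁺(u)| ≤ 1, 2, 3 in the three cases respectively. -/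
/-- Adjacency (edge) relation of the cellular interference graph: `{u,v}` is an
edge iff `u, v ∈ V r` and there is `(a,b) ∈ ℤ²` with `(a+b) mod 3 ≠ 0` such that
`{u,v}` is one of `{(a,b),(a,b+1)}`, `{(a,b),(a+1,b+1)}`, `{(a,b+1),(a+1,b+1)}`. -/
def Adj (r : ℤ) (u v : ℤ × ℤ) : Prop :=
  u ∈ V r ∧ v ∈ V r ∧ ∃ a b : ℤ, (a + b) % 3 ≠ 0 ∧
    ( ({u, v} : Set (ℤ × ℤ)) = {(a, b), (a, b + 1)} ∨
      ({u, v} : Set (ℤ × ℤ)) = {(a, b), (a + 1, b + 1)} ∨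
      ({u, v} : Set (ℤ × ℤ)) = {(a, b + 1), (a + 1, b + 1)} )

/-- The "left-to-right, top-down" decoding order: `prec u v` (i.e. `u ≺ v`) iff
`u.2 > v.2`, or `u.2 = v.2` and `u.1 < v.1`. -/
def prec (u v : ℤ × ℤ) : Prop := v.2 < u.2 ∨ (u.2 = v.2 ∧ u.1 < v.1)

/-! Every edge of `E(r)` is a side of a triangle `(a,b), (a,b+1), (a+1,b+1)` whose base
point has `f ≠ 0`. The later neighbours of `u = (a,b)` are `(a+1,b)` and `(a,b-1)`, joined to
`u` through the base point `(a,b-1)`, and `(a-1,b-1)`, which is itself the base point; since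
`f(a,b-1) ≡ f(u) - 1` and `f(a-1,b-1) ≡ f(u) - 2`, the value `f(u)` decides which survive. -/

lemma adj_prec_cases {r a b : ℤ} {v : ℤ × ℤ} (h : Adj r (a, b) v) (hp : prec (a, b) v) :
    (f (a, b - 1) ≠ 0 ∧ (v = (a + 1, b) ∨ v = (a, b - 1))) ∨
      (f (a - 1, b - 1) ≠ 0 ∧ v = (a - 1, b - 1)) := by
  obtain ⟨-, -, a', b', hbase, hedge⟩ := h
  obtain ⟨v₁, v₂⟩ := v
  simp only [prec, f] at hp ⊢
  rcases hedge with hedge | hedge | hedge <;>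
  · simp only [Set.pair_eq_pair_iff, Prod.ext_iff] at hedge ⊢
    omega

theorem in_degree_structure_general (r : ℤ) (a b : ℤ) :
    (f (a, b) = 1 →
      {v : ℤ × ℤ | v ∈ V r ∧ Adj r (a, b) v ∧ prec (a, b) v} ⊆
        {(a - 1, b - 1)}) ∧
    (f (a, b) = 2 →
      {v : ℤ × ℤ | v ∈ V r ∧ Adj r (a, b) v ∧ prec (a, b) v} ⊆
        {(a + 1, b), (a, b - 1)}) ∧
    (f (a, b) = 0 →
      {v : ℤ × ℤ | v ∈ V r ∧ Adj r (a, b) v ∧ prec (a, b) v} ⊆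
        {(a + 1, b), (a, b - 1), (a - 1, b - 1)}) := by
  refine ⟨?_, ?_, ?_⟩ <;> rintro hfu v ⟨-, hadj, hp⟩ <;>
  · rcases adj_prec_cases hadj hp with ⟨hbase, rfl | rfl⟩ | ⟨hbase, rfl⟩ <;>
    · simp only [f, Set.mem_insert_iff, Set.mem_singleton_iff, Prod.ext_iff, and_true, true_or,
        or_true] at hfu hbase ⊢ <;> omega

/-- **In-degree structure under the left-to-right, top-down decoding order.**
For `u = (a,b) ∈ V(r)` let `N⁺(u) = {v ∈ V(r) : {u,v} ∈ E(r) ∧ u ≺ v}`. Then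
`N⁺(u) ⊆ {(a−1,b−1)}` if `f(u) = 1`, `N⁺(u) ⊆ {(a+1,b),(a,b−1)}` if `f(u) = 2`,
and `N⁺(u) ⊆ {(a+1,b),(a,b−1),(a−1,b−1)}` if `f(u) = 0`; in particular
`|N⁺(u)| ≤ 1, 2, 3` respectively. -/
theorem in_degree_structure (r : ℤ) (hr : 1 ≤ r) (a b : ℤ)
    (hu : (a, b) ∈ V r) :
    (f (a, b) = 1 →
      {v : ℤ × ℤ | v ∈ V r ∧ Adj r (a, b) v ∧ prec (a, b) v} ⊆
        {(a - 1, b - 1)}) ∧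
    (f (a, b) = 2 →
      {v : ℤ × ℤ | v ∈ V r ∧ Adj r (a, b) v ∧ prec (a, b) v} ⊆
        {(a + 1, b), (a, b - 1)}) ∧
    (f (a, b) = 0 →
      {v : ℤ × ℤ | v ∈ V r ∧ Adj r (a, b) v ∧ prec (a, b) v} ⊆
        {(a + 1, b), (a, b - 1), (a - 1, b - 1)}) :=
  in_degree_structure_general r a b
end

section
/- At most one later-decoded neighbor in the cosets k = 0 and k = 2: let r ≥ 1 and k ∈ {0,2}, and set V_k(r) = {v ∈ V(r) : f(v) = k}. Then for every u ∈ V(r), the set {v ∈ V_k(r) : {u,v} ∈ E(r) and u ≺ v} has at most one element. (This is the condition that allows each user in V_k(r) to carry one extra data stream in the odd-M achievability scheme.) -/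
/-!
Seen from `u = (a, b)`, the only neighbours later in the decoding order are `(a + 1, b)`,
`(a, b - 1)` and `(a - 1, b - 1)`, and each is present only when the triangle carrying the
edge lies in a nonzero coset. The first has `f = f u + 1` and needs `f u ≠ 1`, the second
has `f = f u - 1` and needs `f u ≠ 1`, the third has `f = f u + 1` and needs `f u ≠ 2`.
Whatever `f u` is, exactly one of the surviving candidates avoids the coset `f = 1`.
-/

lemma eq_of_adj_of_prec {r : ℤ} {u v : ℤ × ℤ} (h : Adj r u v) (hp : prec u v) :
    (v = (u.1 + 1, u.2) ∧ (u.1 + u.2) % 3 ≠ 1) ∨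
    (v = (u.1, u.2 - 1) ∧ (u.1 + u.2) % 3 ≠ 1) ∨
    (v = (u.1 - 1, u.2 - 1) ∧ (u.1 + u.2) % 3 ≠ 2) := by
  obtain ⟨-, -, a, b, hab, hc | hc | hc⟩ := h <;>
    rw [Set.pair_eq_pair_iff] at hc <;>
    obtain ⟨h1, h2⟩ | ⟨h1, h2⟩ := hc <;>
    obtain ⟨u1, u2⟩ := u <;> obtain ⟨v1, v2⟩ := v <;>
    simp only [Prod.mk.injEq] at h1 h2 ⊢ <;>
    rcases hp with hp | ⟨hp1, hp2⟩ <;>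
    omega

/-- The unique later neighbour of `u` outside the coset `f = 1`, if it is adjacent at all. -/
def laterNeighbor (u : ℤ × ℤ) : ℤ × ℤ :=
  if f u = 0 then (u.1, u.2 - 1)
  else if f u = 1 then (u.1 - 1, u.2 - 1)
  else (u.1 + 1, u.2)

lemma eq_laterNeighbor {r : ℤ} {u v : ℤ × ℤ} (h : Adj r u v) (hp : prec u v) (hv : f v ≠ 1) :
    v = laterNeighbor u := by
  unfold laterNeighbor
  unfold f at hv ⊢
  rcases eq_of_adj_of_prec h hp with ⟨rfl, hu⟩ | ⟨rfl, hu⟩ | ⟨rfl, hu⟩ <;>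
    split_ifs <;> simp only [Prod.mk.injEq] at hv ⊢ <;> omega

theorem at_most_one_later_neighbor_general (r : ℤ) (k : ℤ)
    (hk : k = 0 ∨ k = 2) (u : ℤ × ℤ) :
    {v : ℤ × ℤ | v ∈ V r ∧ f v = k ∧ Adj r u v ∧ prec u v}.Subsingleton := by
  have hk1 : k ≠ 1 := by omega
  rintro v ⟨-, rfl, hav, hpv⟩ w ⟨-, hfw, haw, hpw⟩
  rw [eq_laterNeighbor hav hpv hk1, eq_laterNeighbor haw hpw (hfw ▸ hk1)]

/-- **At most one later-decoded neighbor in the cosets `k = 0` and `k = 2`.**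
For `k ∈ {0,2}` and `V_k(r) = {v ∈ V(r) : f(v) = k}`, every `u ∈ V(r)` has at
most one neighbor `v ∈ V_k(r)` with `u ≺ v`. -/
theorem at_most_one_later_neighbor (r : ℤ) (hr : 1 ≤ r) (k : ℤ)
    (hk : k = 0 ∨ k = 2) (u : ℤ × ℤ) (hu : u ∈ V r) :
    {v : ℤ × ℤ | v ∈ V r ∧ f v = k ∧ Adj r u v ∧ prec u v}.Subsingleton :=
  at_most_one_later_neighbor_general r k hk u
end
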